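/- Let Ŝ = A₀⊗B₀ + A₁⊗B₀ + A₀⊗B₁ − A₁⊗B₁ with A₀ = σx, A₁ = σz, B₀ = (σx+σz)/√2, B₁ = (σx−σz)/√2, and for a two-qubit density matrix ρ define S(ρ) = Tr(ρŜ) and F(ρ) = ⟨Φ⁺|ρ|Φ⁺⟩. Then for every positive semidefinite matrix ρ with trace 1, S(ρ)/(2√2) ≤ F(ρ) ≤ S(ρ)/(4√2) + 1/2. -/

import Mathlib

open Matrix Kronecker Complex ComplexOrder

noncomputable section

/-- Pauli X matrix. -/
def sigX : Matrix (Fin 2) (Fin 2) ℂ := !![0, 1; 1, 0]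

/-- Pauli Z matrix. -/
def sigZ : Matrix (Fin 2) (Fin 2) ℂ := !![1, 0; 0, -1]

/-- Bob's observable `B₀ = (σx + σz)/√2`. -/
def Bob0 : Matrix (Fin 2) (Fin 2) ℂ := ((Real.sqrt 2 : ℂ))⁻¹ • (sigX + sigZ)

/-- Bob's observable `B₁ = (σx − σz)/√2`. -/
def Bob1 : Matrix (Fin 2) (Fin 2) ℂ := ((Real.sqrt 2 : ℂ))⁻¹ • (sigX - sigZ)

/-- The CHSH operator `Ŝ = A₀⊗B₀ + A₁⊗B₀ + A₀⊗B₁ − A₁⊗B₁` with `A₀ = σx`, `A₁ = σz`. -/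
def Shat : Matrix (Fin 2 × Fin 2) (Fin 2 × Fin 2) ℂ :=
  sigX ⊗ₖ Bob0 + sigZ ⊗ₖ Bob0 + sigX ⊗ₖ Bob1 - sigZ ⊗ₖ Bob1

/-- Bell state `|Φ⁺⟩ = (|00⟩ + |11⟩)/√2`. -/
def phiPlus : Fin 2 × Fin 2 → ℂ :=
  fun p => if p = (0, 0) ∨ p = (1, 1) then ((Real.sqrt 2 : ℂ))⁻¹ else 0

/-- CHSH measure `S(ρ) = Tr(ρ Ŝ)` (a real number for Hermitian ρ). -/
def Smeas (ρ : Matrix (Fin 2 × Fin 2) (Fin 2 × Fin 2) ℂ) : ℝ :=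
  ((ρ * Shat).trace).re

/-- Entanglement fidelity `F(ρ) = ⟨Φ⁺|ρ|Φ⁺⟩`. -/
def Fent (ρ : Matrix (Fin 2 × Fin 2) (Fin 2 × Fin 2) ℂ) : ℝ :=
  (star phiPlus ⬝ᵥ ρ *ᵥ phiPlus).re

end


/-!
In the Bell basis `Ŝ = 2√2 (|Φ⁺⟩⟨Φ⁺| − |Ψ⁻⟩⟨Ψ⁻|)`, so `S(ρ) = 2√2 (F(ρ) − ⟨Ψ⁻|ρ|Ψ⁻⟩)`.
The lower bound is then `⟨Ψ⁻|ρ|Ψ⁻⟩ ≥ 0`, and the upper bound is `F(ρ) + ⟨Ψ⁻|ρ|Ψ⁻⟩ ≤ 1`, which holds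
because the four Bell weights of `ρ` are nonnegative and sum to `Tr ρ = 1`.
-/

noncomputable section

def phiMinus : Fin 2 × Fin 2 → ℂ := fun p => (Real.sqrt 2 : ℂ)⁻¹ * sigZ p.1 p.2

def psiPlus : Fin 2 × Fin 2 → ℂ := fun p => (Real.sqrt 2 : ℂ)⁻¹ * sigX p.1 p.2

def psiMinus : Fin 2 × Fin 2 → ℂ := fun p => (Real.sqrt 2 : ℂ)⁻¹ * !![0, 1; -1, 0] p.1 p.2

def expectation {n : Type*} [Fintype n] (ρ : Matrix n n ℂ) (v : n → ℂ) : ℝ :=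
  (star v ⬝ᵥ ρ *ᵥ v).re

end

theorem Fent_eq_expectation (ρ : Matrix (Fin 2 × Fin 2) (Fin 2 × Fin 2) ℂ) :
    Fent ρ = expectation ρ phiPlus :=
  rfl

theorem Matrix.PosSemidef.expectation_nonneg {n : Type*} [Fintype n] {ρ : Matrix n n ℂ}
    (hρ : ρ.PosSemidef) (v : n → ℂ) : 0 ≤ expectation ρ v :=
  (Complex.le_def.mp (hρ.dotProduct_mulVec_nonneg v)).1

theorem Matrix.trace_mul_vecMulVec_star {n R : Type*} [Fintype n] [CommSemiring R] [StarRing R]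
    (A : Matrix n n R) (v : n → R) :
    (A * vecMulVec v (star v)).trace = star v ⬝ᵥ A *ᵥ v := by
  rw [mul_vecMulVec, trace_vecMulVec, dotProduct_comm]

theorem re_trace_mul_vecMulVec_star {n : Type*} [Fintype n] (ρ : Matrix n n ℂ) (v : n → ℂ) :
    (ρ * vecMulVec v (star v)).trace.re = expectation ρ v := by
  rw [trace_mul_vecMulVec_star, expectation]

theorem ofReal_sqrt_two_sq : ((Real.sqrt 2 : ℝ) : ℂ) ^ 2 = 2 := by
  rw [← Complex.ofReal_pow, Real.sq_sqrt zero_le_two, Complex.ofReal_ofNat]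

theorem Shat_eq_smul_sub_bell_projections :
    Shat = ((2 * Real.sqrt 2 : ℝ) : ℂ) •
      (vecMulVec phiPlus (star phiPlus) - vecMulVec psiMinus (star psiMinus)) := by
  ext ⟨a, b⟩ ⟨c, d⟩
  fin_cases a <;> fin_cases b <;> fin_cases c <;> fin_cases d <;>
    simp [Shat, Bob0, Bob1, sigX, sigZ, phiPlus, psiMinus, vecMulVec_apply] <;>
    field_simp <;> norm_num [ofReal_sqrt_two_sq]

theorem sum_bell_projections :
    vecMulVec phiPlus (star phiPlus) + vecMulVec phiMinus (star phiMinus)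
      + vecMulVec psiPlus (star psiPlus) + vecMulVec psiMinus (star psiMinus) = 1 := by
  ext ⟨a, b⟩ ⟨c, d⟩
  fin_cases a <;> fin_cases b <;> fin_cases c <;> fin_cases d <;>
    simp [sigX, sigZ, phiPlus, phiMinus, psiPlus, psiMinus, vecMulVec_apply, one_apply] <;>
    field_simp <;> norm_num [ofReal_sqrt_two_sq]

theorem Smeas_eq_two_sqrt_two_mul (ρ : Matrix (Fin 2 × Fin 2) (Fin 2 × Fin 2) ℂ) :
    Smeas ρ = 2 * Real.sqrt 2 * (Fent ρ - expectation ρ psiMinus) := by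
  rw [Smeas, Shat_eq_smul_sub_bell_projections, Matrix.mul_smul, trace_smul, smul_eq_mul,
    Complex.re_ofReal_mul, Matrix.mul_sub, trace_sub, Complex.sub_re,
    re_trace_mul_vecMulVec_star, re_trace_mul_vecMulVec_star, Fent_eq_expectation]

theorem sum_expectation_bell_eq_re_trace (ρ : Matrix (Fin 2 × Fin 2) (Fin 2 × Fin 2) ℂ) :
    Fent ρ + expectation ρ phiMinus + expectation ρ psiPlus + expectation ρ psiMinus =
      ρ.trace.re := by
  calc _ = (ρ * (vecMulVec phiPlus (star phiPlus) + vecMulVec phiMinus (star phiMinus)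
          + vecMulVec psiPlus (star psiPlus) + vecMulVec psiMinus (star psiMinus))).trace.re := by
        simp only [Matrix.mul_add, trace_add, Complex.add_re, re_trace_mul_vecMulVec_star,
          Fent_eq_expectation]
    _ = ρ.trace.re := by rw [sum_bell_projections, Matrix.mul_one]

theorem fidelity_bounds (ρ : Matrix (Fin 2 × Fin 2) (Fin 2 × Fin 2) ℂ)
    (hρ : ρ.PosSemidef) (htr : ρ.trace = 1) :
    Smeas ρ / (2 * Real.sqrt 2) ≤ Fent ρ ∧
      Fent ρ ≤ Smeas ρ / (4 * Real.sqrt 2) + 1 / 2 := by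
  have hS : Smeas ρ / (2 * Real.sqrt 2) = Fent ρ - expectation ρ psiMinus := by
    rw [Smeas_eq_two_sqrt_two_mul, mul_div_cancel_left₀ _ (by positivity)]
  have hS' : Smeas ρ / (4 * Real.sqrt 2) = Smeas ρ / (2 * Real.sqrt 2) / 2 := by
    rw [div_div]; ring_nf
  have hsum := sum_expectation_bell_eq_re_trace ρ
  rw [htr, Complex.one_re] at hsum
  have hΦm := hρ.expectation_nonneg phiMinus
  have hΨp := hρ.expectation_nonneg psiPlus
  have hΨm := hρ.expectation_nonneg psiMinus
  constructor <;> linarith
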